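/- The function ψ(x) = exp(ik x̃(x)), where x̃(x) = x + e^{iπ/4} ∫_{x_r}^x σ(s)ds, solves the modified (PML) stationary Schrödinger equation -(ħ²/(2m)) c(x) d/dx (c(x) dψ/dx) = E ψ with c(x) = 1/(1 + e^{iπ/4} σ(x)) and E = ħ²k²/(2m), for all x where σ is continuous. -/

import Mathlib

open Complex Real

/-!
With `x̃' = 1 + e^{iπ/4} σ = c⁻¹` (fundamental theorem of calculus), the chain rule gives
`c ψ' = ik ψ` for `ψ = exp (ik x̃)`, hence `c (c ψ')' = (ik)² ψ = -k² ψ`. The factor `c` is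
always defined: `1 + e^{iπ/4} s` has imaginary part `s sin (π/4)`, so it vanishes for no real `s`.
-/

noncomputable def stretchedCoord (θ : ℂ) (xr : ℝ) (σ : ℝ → ℝ) (x : ℝ) : ℂ :=
  x + θ * ∫ s in xr..x, σ s

theorem one_add_mul_ofReal_ne_zero {θ : ℂ} (hθ : θ.im ≠ 0) (s : ℝ) : 1 + θ * s ≠ 0 := by
  intro h
  have him : θ.im * s = 0 := by simpa using congrArg Complex.im h
  have hs : s = 0 := (mul_eq_zero.mp him).resolve_left hθ
  simp [hs] at h

theorem exp_I_mul_pi_div_four_im_ne_zero : (exp (I * (π / 4))).im ≠ 0 := by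
  rw [mul_comm, ← ofReal_ofNat, ← ofReal_div, exp_ofReal_mul_I_im, sin_pi_div_four]
  positivity

theorem hasDerivAt_stretchedCoord {σ : ℝ → ℝ} (hσ : Continuous σ) (θ : ℂ) (xr x : ℝ) :
    HasDerivAt (stretchedCoord θ xr σ) (1 + θ * σ x) x := by
  have hint : HasDerivAt (fun u => ∫ s in xr..u, σ s) (σ x) x :=
    intervalIntegral.integral_hasDerivAt_right (hσ.intervalIntegrable _ _)
      (hσ.stronglyMeasurableAtFilter _ _) hσ.continuousAt
  exact ofRealCLM.hasDerivAt.add (hint.ofReal_comp.const_mul θ)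

section

variable {σ : ℝ → ℝ} {θ : ℂ} {xr : ℝ}

theorem hasDerivAt_exp_mul_stretchedCoord (hσ : Continuous σ) (a : ℂ) (x : ℝ) :
    HasDerivAt (fun y => exp (a * stretchedCoord θ xr σ y))
      (a * (1 + θ * σ x) * exp (a * stretchedCoord θ xr σ x)) x := by
  convert ((hasDerivAt_stretchedCoord hσ θ xr x).const_mul a).cexp using 1
  ring

theorem inv_mul_deriv_exp_mul_stretchedCoord (hσ : Continuous σ)
    (hθ : ∀ s : ℝ, 1 + θ * s ≠ 0) (a : ℂ) (x : ℝ) :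
    (1 + θ * σ x)⁻¹ * deriv (fun y => exp (a * stretchedCoord θ xr σ y)) x
      = a * exp (a * stretchedCoord θ xr σ x) := by
  rw [(hasDerivAt_exp_mul_stretchedCoord hσ a x).deriv]
  field_simp [hθ (σ x)]

theorem inv_mul_deriv_inv_mul_deriv_exp_mul_stretchedCoord (hσ : Continuous σ)
    (hθ : ∀ s : ℝ, 1 + θ * s ≠ 0) (a : ℂ) (x : ℝ) :
    (1 + θ * σ x)⁻¹ * deriv (fun y => (1 + θ * σ y)⁻¹ *
        deriv (fun z => exp (a * stretchedCoord θ xr σ z)) y) x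
      = a ^ 2 * exp (a * stretchedCoord θ xr σ x) := by
  simp_rw [inv_mul_deriv_exp_mul_stretchedCoord hσ hθ a]
  rw [((hasDerivAt_exp_mul_stretchedCoord hσ a x).const_mul a).deriv]
  field_simp [hθ (σ x)]

end

theorem stmt6_general (hbar m k xr : ℝ)
    (σ : ℝ → ℝ) (hσc : Continuous σ)
    (c ψ : ℝ → ℂ)
    (hc : ∀ x, c x = (1 + Complex.exp (Complex.I * (π / 4)) * σ x)⁻¹)
    (hψ : ∀ x, ψ x = Complex.exp (Complex.I * k *
        (x + Complex.exp (Complex.I * (π / 4)) * (∫ s in xr..x, σ s)))) :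
    ∀ x : ℝ,
      -((hbar : ℂ) ^ 2 / (2 * m)) * (c x * deriv (fun y => c y * deriv ψ y) x)
        = ((hbar ^ 2 * k ^ 2 / (2 * m) : ℝ) : ℂ) * ψ x := by
  intro x
  obtain rfl : c = fun y => (1 + exp (I * (π / 4)) * σ y)⁻¹ := funext hc
  obtain rfl : ψ = fun y => exp (I * k * stretchedCoord (exp (I * (π / 4))) xr σ y) :=
    funext hψ
  rw [inv_mul_deriv_inv_mul_deriv_exp_mul_stretchedCoord hσc
    (one_add_mul_ofReal_ne_zero exp_I_mul_pi_div_four_im_ne_zero)]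
  push_cast
  ring_nf
  rw [I_sq]
  ring

/-- `ψ(x) = exp(ik x̃(x))` with `x̃(x) = x + e^{iπ/4} ∫_{x_r}^x σ` solves the PML
stationary Schrödinger equation `-(ħ²/(2m)) c (c ψ')' = E ψ` with
`c(x) = (1 + e^{iπ/4} σ(x))⁻¹` and `E = ħ²k²/(2m)`. -/
theorem stmt6 (hbar m k xr : ℝ) (hh : 0 < hbar) (hm : 0 < m) (hk : 0 < k)
    (σ : ℝ → ℝ) (hσc : Continuous σ) (hσ : ∀ x, 0 ≤ σ x)
    (c ψ : ℝ → ℂ)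
    (hc : ∀ x, c x = (1 + Complex.exp (Complex.I * (π / 4)) * σ x)⁻¹)
    (hψ : ∀ x, ψ x = Complex.exp (Complex.I * k *
        (x + Complex.exp (Complex.I * (π / 4)) * (∫ s in xr..x, σ s)))) :
    ∀ x : ℝ,
      -((hbar : ℂ) ^ 2 / (2 * m)) * (c x * deriv (fun y => c y * deriv ψ y) x)
        = ((hbar ^ 2 * k ^ 2 / (2 * m) : ℝ) : ℂ) * ψ x :=
  stmt6_general hbar m k xr σ hσc c ψ hc hψ
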